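/- Let g : (0,+∞) → [0,+∞) be a measurable function and let A, A' ∈ ℝ with A' < A. If limsup_{a→+∞} (1/ln a) · limsup_{r→+∞} ∫_r^{ar} g(t)/t² dt ≥ A, then sup over all 1 ≤ r < R < +∞ of ( ∫_r^R g(t)/t² dt − A'·ln(R/r) ) = +∞. -/

import Mathlib

/-!
Fix `b` with `A' < b < A`. The density hypothesis yields arbitrarily large `a` together with
`r ≥ 1` such that `∫_r^{ar} g(t)/t² dt > b · ln a`, so the pair `(r, ar)` makes the quantity
exceed `(b - A') · ln a`, which tends to `+∞` with `a`.
-/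

open Filter

theorem EReal.coe_mul_lt_of_lt_coe_inv_mul {b c : ℝ} (hc : 0 < c) {L : EReal}
    (h : (b : EReal) < ((c⁻¹ : ℝ) : EReal) * L) : ((b * c : ℝ) : EReal) < L := by
  induction L using EReal.rec with
  | bot => simp [EReal.mul_bot_of_pos (EReal.coe_pos.2 (inv_pos.2 hc))] at h
  | coe x =>
    rw [← EReal.coe_mul, EReal.coe_lt_coe_iff, inv_mul_eq_div, lt_div_iff₀ hc] at h
    exact EReal.coe_lt_coe h
  | top => exact EReal.coe_lt_top _

theorem frequently_frequently_mul_log_lt_of_lt_limsup {F : ℝ → ℝ → ℝ} {b : ℝ}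
    (h : (b : EReal) < limsup (fun a : ℝ =>
      (↑(Real.log a)⁻¹ : EReal) * limsup (fun r : ℝ => (F a r : EReal)) atTop) atTop) :
    ∃ᶠ a in atTop, ∃ᶠ r in atTop, b * Real.log a < F a r := by
  refine ((frequently_lt_of_lt_limsup (by isBoundedDefault) h).and_eventually
    (eventually_gt_atTop 1)).mono fun a ⟨ha, ha1⟩ => ?_
  refine (frequently_lt_of_lt_limsup (by isBoundedDefault)
    (EReal.coe_mul_lt_of_lt_coe_inv_mul (Real.log_pos ha1) ha)).mono fun r hr => ?_
  exact EReal.coe_lt_coe_iff.1 hr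

theorem unbounded_of_block_density_general
    (g : ℝ → ℝ)
    (A A' : ℝ) (hAA' : A' < A)
    (hdens : (↑A : EReal) ≤
      Filter.limsup (fun a : ℝ =>
        (↑(Real.log a)⁻¹ : EReal) *
          Filter.limsup (fun r : ℝ =>
            (↑(∫ t in Set.Ioc r (a * r), g t / t ^ 2) : EReal)) Filter.atTop)
        Filter.atTop) :
    ∀ B : ℝ, ∃ r R : ℝ, 1 ≤ r ∧ r < R ∧
      B ≤ (∫ t in Set.Ioc r R, g t / t ^ 2) - A' * Real.log (R / r) := by
  intro B
  obtain ⟨b, hA'b, hbA⟩ := exists_between hAA'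
  have hblocks := frequently_frequently_mul_log_lt_of_lt_limsup
    ((EReal.coe_lt_coe_iff.2 hbA).trans_le hdens)
  have hlarge : ∀ᶠ a in atTop, 1 < a ∧ B ≤ (b - A') * Real.log a :=
    (eventually_gt_atTop 1).and
      ((Real.tendsto_log_atTop.const_mul_atTop (sub_pos.2 hA'b)).eventually_ge_atTop B)
  obtain ⟨a, hblock, ha1, haB⟩ := (hblocks.and_eventually hlarge).exists
  obtain ⟨r, hr, hr1⟩ := (hblock.and_eventually (eventually_ge_atTop 1)).exists
  refine ⟨r, a * r, hr1, lt_mul_of_one_lt_left (by linarith) ha1, ?_⟩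
  rw [mul_div_cancel_right₀ a (by positivity : r ≠ 0)]
  linarith

/-- If the upper logarithmic block-density
`limsup_{a→+∞} (1/ln a)·limsup_{r→+∞} ∫_r^{ar} g(t)/t² dt` of a nonnegative measurable
`g` on `(0,∞)` is at least `A`, then for every `A' < A` the supremum over
`1 ≤ r < R < ∞` of `∫_r^R g(t)/t² dt − A'·ln(R/r)` equals `+∞`. -/
theorem unbounded_of_block_density
    (g : ℝ → ℝ) (hmeas : Measurable g) (hpos : ∀ t : ℝ, 0 < t → 0 ≤ g t)
    (A A' : ℝ) (hAA' : A' < A)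
    (hdens : (↑A : EReal) ≤
      Filter.limsup (fun a : ℝ =>
        (↑(Real.log a)⁻¹ : EReal) *
          Filter.limsup (fun r : ℝ =>
            (↑(∫ t in Set.Ioc r (a * r), g t / t ^ 2) : EReal)) Filter.atTop)
        Filter.atTop) :
    ∀ B : ℝ, ∃ r R : ℝ, 1 ≤ r ∧ r < R ∧
      B ≤ (∫ t in Set.Ioc r R, g t / t ^ 2) - A' * Real.log (R / r) :=
  unbounded_of_block_density_general g A A' hAA' hdens
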